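/- arXiv:1606.05268 — 2 statements merged into one kernel-verified Lean document; each statement's English description precedes it below -/
import Mathlib

section
/- If C ⊆ A^n is a code of cardinality m ≥ 3 with encoding bijection λ : M → C, then Iso(C) = Stab_W(η_λ), where Stab_W(η) = {g ∈ S(M) : W(g(η)) = W(η)}. -/
/-- Partitions of `Fin m` are represented as finsets of finsets. -/
abbrev Ptn (m : ℕ) := Finset (Finset (Fin m))

/-- `α` is a partition of `Fin m`: all classes are nonempty and every element
belongs to exactly one class. -/
def IsPartition {m : ℕ} (α : Ptn m) : Prop :=
  (∀ c ∈ α, c.Nonempty) ∧ ∀ i : Fin m, ∃! c, c ∈ α ∧ i ∈ c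

/-- `P`: the set of partitions of `M = Fin m` into at most `q` nonempty classes. -/
def Pset (m q : ℕ) : Set (Ptn m) :=
  {α | IsPartition α ∧ α.card ≤ q}

/-- `P₂`: the partitions of the form `{{i,j}, M ∖ {i,j}}` for 2-element subsets `{i,j}`. -/
def P2set (m : ℕ) : Set (Ptn m) :=
  {α | ∃ p : Finset (Fin m), p.card = 2 ∧ α = {p, pᶜ}}

/-- `O` as a set: the 2-element subsets of `M = Fin m`. -/
def Oset (m : ℕ) : Set (Finset (Fin m)) := {p | p.card = 2}

/-- `O` as a type: the 2-element subsets of `M = Fin m`. -/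
abbrev OO (m : ℕ) := {p : Finset (Fin m) // p.card = 2}

/-- `P` as a type. -/
abbrev PP (m q : ℕ) := {α : Ptn m // α ∈ Pset m q}

noncomputable instance (m q : ℕ) : Fintype (PP m q) := Fintype.ofFinite _

/-- The canonical action of `S(M)` on partitions: `g({c₁,…,cₜ}) = {g(c₁),…,g(cₜ)}`. -/
def permPart {m : ℕ} (g : Equiv.Perm (Fin m)) (α : Ptn m) : Ptn m :=
  α.image fun c => c.image g

/-- The canonical action of `S(M)` on subsets of `M`. -/
def permPair {m : ℕ} (g : Equiv.Perm (Fin m)) (p : Finset (Fin m)) : Finset (Fin m) :=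
  p.image g

/-- `H` is closed under the action `act` on `S` if every `g` that maps each
`H`-orbit of `S` onto itself belongs to `H`. -/
def ClosedUnder {m : ℕ} {X : Type*} (act : Equiv.Perm (Fin m) → X → X) (S : Set X)
    (H : Set (Equiv.Perm (Fin m))) : Prop :=
  ∀ g : Equiv.Perm (Fin m), (∀ x ∈ S, ∃ h ∈ H, act g x = act h x) → g ∈ H

section Code

variable {m n : ℕ} {A : Type*} [Fintype A] [DecidableEq A]

/-- A map `h : Aⁿ → Aⁿ` is monomial if `h(a) = (σ₁(a_{π(1)}), …, σₙ(a_{π(n)}))`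
for a permutation `π ∈ Sₙ` and permutations `σ₁,…,σₙ` of `A`. -/
def IsMonomial (h : (Fin n → A) → (Fin n → A)) : Prop :=
  ∃ (π : Equiv.Perm (Fin n)) (σ : Fin n → Equiv.Perm A),
    ∀ (a : Fin n → A) (k : Fin n), h a k = σ k (a (π k))

/-- `Iso(C)`: the permutations `g` of the messages such that `λ ∘ g ∘ λ⁻¹` is a
Hamming isometry of the code encoded by `lam`. -/
def IsoSet (lam : Fin m → Fin n → A) : Set (Equiv.Perm (Fin m)) :=
  {g | ∀ i j : Fin m, hammingDist (lam (g i)) (lam (g j)) = hammingDist (lam i) (lam j)}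

/-- `Mon(C)`: the elements of `Iso(C)` such that `λ ∘ g ∘ λ⁻¹` extends to a
monomial map of `Aⁿ`. -/
def MonSet (lam : Fin m → Fin n → A) : Set (Equiv.Perm (Fin m)) :=
  {g | g ∈ IsoSet lam ∧
    ∃ h : (Fin n → A) → (Fin n → A), IsMonomial h ∧ ∀ i : Fin m, h (lam i) = lam (g i)}

/-- `Ψ(x) = {x⁻¹(a) : a ∈ A} ∖ {∅}`, the partition of `M` induced by `x : M → A`. -/
def PsiF (x : Fin m → A) : Ptn m :=
  (Finset.univ.image fun a : A => Finset.univ.filter fun i : Fin m => x i = a).erase ∅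

/-- The multiplicity function `η_λ(α) = |{k : Ψ(λ_k) = α}|`. -/
def eta (lam : Fin m → Fin n → A) (α : Ptn m) : ℚ :=
  (((Finset.univ : Finset (Fin n)).filter fun k => PsiF (fun i => lam i k) = α).card : ℚ)

/-- The multiplicity function, restricted to `P`. -/
def etaP (q : ℕ) (lam : Fin m → Fin n → A) : PP m q → ℚ := fun α => eta lam α.1

end Code

open Classical in
/-- `Δ_α({i,j}) = 0` if `i` and `j` lie in the same class of `α`, and `1` otherwise. -/
noncomputable def Delta {m q : ℕ} (α : PP m q) (p : OO m) : ℚ :=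
  if ∃ c ∈ α.1, p.1 ⊆ c then 0 else 1

/-- The linear map `W : F(P,ℚ) → F(O,ℚ)`, `W(η)(p) = Σ_{α∈P} η(α)Δ_α(p)`. -/
noncomputable def WLin (m q : ℕ) : (PP m q → ℚ) →ₗ[ℚ] (OO m → ℚ) where
  toFun η := fun p => ∑ α : PP m q, η α * Delta α p
  map_add' x y := by
    funext p
    simp [add_mul, Finset.sum_add_distrib]
  map_smul' c x := by
    funext p
    simp [Finset.mul_sum, mul_assoc]

/-- The matrix `B`: `B_{p,t} = 1` if `|p ∩ t| = 1`, and `0` otherwise. -/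
def Bmat (m : ℕ) : Matrix (OO m) (OO m) ℚ :=
  Matrix.of fun p t => if (p.1 ∩ t.1).card = 1 then 1 else 0

/-- The matrix `D`: `2(m−2)(m−4)·D_{p,t}` equals `−m²+8m−14` if `p = t`,
`m−4` if `|p∩t| = 1`, and `−2` if `p ∩ t = ∅`. -/
def Dmat (m : ℕ) : Matrix (OO m) (OO m) ℚ :=
  Matrix.of fun p t =>
    (if p = t then -(m : ℚ) ^ 2 + 8 * m - 14
      else if (p.1 ∩ t.1).card = 1 then (m : ℚ) - 4 else -2) /
      (2 * ((m : ℚ) - 2) * ((m : ℚ) - 4))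

/-- `ξ_x = Σ_{r∈O} x(r) Σ_{p∈O} D_{r,p} · id_{{p, M∖p}}`. -/
noncomputable def xi (m q : ℕ) (x : OO m → ℚ) : PP m q → ℚ := fun α =>
  ∑ r : OO m, x r * ∑ p : OO m, Dmat m r p * (if α.1 = ({p.1, p.1ᶜ} : Ptn m) then 1 else 0)

/-- `ζ_α = id_α − ξ_{Δ_α}`. -/
noncomputable def zeta (m q : ℕ) (α : PP m q) : PP m q → ℚ :=
  (fun β => if β = α then 1 else 0) - xi m q fun p => Delta α p

/-- `V₀`: the functions in `F(P,ℚ)` vanishing on `P ∖ P₂`. -/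
def V0 (m q : ℕ) : Set (PP m q → ℚ) :=
  {η | ∀ α : PP m q, (α : Ptn m) ∉ P2set m → η α = 0}

open Classical in
/-- `id_{P₂} = Σ_{α∈P₂} id_α`. -/
noncomputable def idP2 (m q : ℕ) : PP m q → ℚ := fun α =>
  if (α : Ptn m) ∈ P2set m then 1 else 0

theorem permPart_mem_Pset {m q : ℕ} (g : Equiv.Perm (Fin m)) {α : Ptn m}
    (hα : α ∈ Pset m q) : permPart g α ∈ Pset m q := by
  obtain ⟨⟨hne, huniq⟩, hcard⟩ := hα
  refine ⟨⟨?_, ?_⟩, le_trans Finset.card_image_le hcard⟩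
  · intro c hc
    simp only [permPart, Finset.mem_image] at hc
    obtain ⟨d, hd, rfl⟩ := hc
    exact (hne d hd).image g
  · intro i
    obtain ⟨c, ⟨hc, hic⟩, hun⟩ := huniq (g.symm i)
    refine ⟨c.image g, ⟨?_, ?_⟩, ?_⟩
    · simp only [permPart, Finset.mem_image]
      exact ⟨c, hc, rfl⟩
    · exact Finset.mem_image.2 ⟨g.symm i, hic, g.apply_symm_apply i⟩
    · rintro d ⟨hd, hid⟩
      simp only [permPart, Finset.mem_image] at hd
      obtain ⟨e, he, rfl⟩ := hd
      rw [Finset.mem_image] at hid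
      obtain ⟨j, hj, hji⟩ := hid
      have hjs : j = g.symm i := by
        apply g.injective
        rw [hji, g.apply_symm_apply]
      subst hjs
      rw [hun e ⟨he, hj⟩]

/-- The action of `S(M)` on `P`. -/
def permPP {m q : ℕ} (g : Equiv.Perm (Fin m)) (α : PP m q) : PP m q :=
  ⟨permPart g α.1, permPart_mem_Pset g α.2⟩

/-- The action of `S(M)` on `F(P,ℚ)`: `g(η)(α) = η(g⁻¹(α))`. -/
def permF {m q : ℕ} (g : Equiv.Perm (Fin m)) (η : PP m q → ℚ) : PP m q → ℚ :=
  fun α => η (permPP g⁻¹ α)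

/-- `Stab(η) = {g ∈ S(M) : g(η) = η}`. -/
def StabSet {m q : ℕ} (η : PP m q → ℚ) : Set (Equiv.Perm (Fin m)) :=
  {g | permF g η = η}

/-- `Stab_W(η) = {g ∈ S(M) : W(g(η)) = W(η)}`. -/
def StabWSet (m q : ℕ) (η : PP m q → ℚ) : Set (Equiv.Perm (Fin m)) :=
  {g | WLin m q (permF g η) = WLin m q η}

/-!
Summing `Δ` against the multiplicity function counts, for a pair `{i, j}`, the coordinates
`k` whose partition `Ψ(λ_k)` separates `i` and `j`; so `W(η_λ)({i, j})` is the Hamming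
distance between the codewords `λ(i)` and `λ(j)`, and `W(η_λ)` is just the distance matrix of
the code. Since `Ψ` is `S(M)`-equivariant, `g(η_λ) = η_{λ ∘ g⁻¹}`, hence `W(g(η_λ)) = W(η_λ)`
says that `λ ∘ g⁻¹` has the same distance matrix as `λ`, i.e. that `g` is an isometry.
-/

theorem permPart_mul {m : ℕ} (g h : Equiv.Perm (Fin m)) (α : Ptn m) :
    permPart (g * h) α = permPart g (permPart h α) := by
  simp [permPart, Finset.image_image, Function.comp_def]

theorem permPart_one {m : ℕ} (α : Ptn m) : permPart 1 α = α := by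
  simp [permPart]

theorem permPart_eq_iff_eq_permPart_inv {m : ℕ} (g : Equiv.Perm (Fin m)) (α β : Ptn m) :
    permPart g β = α ↔ β = permPart g⁻¹ α := by
  constructor
  · rintro rfl
    rw [← permPart_mul, inv_mul_cancel, permPart_one]
  · rintro rfl
    rw [← permPart_mul, mul_inv_cancel, permPart_one]

section Coordinates

variable {m n : ℕ} {A : Type*} [Fintype A] [DecidableEq A]

theorem PsiF_mem_Pset (x : Fin m → A) : PsiF x ∈ Pset m (Fintype.card A) := by
  refine ⟨⟨fun c hc => Finset.nonempty_iff_ne_empty.2 (Finset.mem_erase.1 hc).1,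
    fun i => ?_⟩, ?_⟩
  · refine ⟨Finset.univ.filter fun j => x j = x i, ⟨?_, by simp⟩, ?_⟩
    · refine Finset.mem_erase.2 ⟨?_, Finset.mem_image_of_mem _ (Finset.mem_univ (x i))⟩
      exact Finset.nonempty_iff_ne_empty.1 ⟨i, by simp⟩
    · rintro c ⟨hc, hic⟩
      obtain ⟨a, -, rfl⟩ := Finset.mem_image.1 (Finset.mem_erase.1 hc).2
      obtain rfl : x i = a := by simpa using hic
      rfl
  · exact (Finset.card_erase_le).trans (Finset.card_image_le.trans (by simp))

def psiPP (x : Fin m → A) : PP m (Fintype.card A) := ⟨PsiF x, PsiF_mem_Pset x⟩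

theorem Delta_psiPP_pair (x : Fin m → A) {p : OO m} {i j : Fin m} (hp : p.1 = {i, j}) :
    Delta (psiPP x) p = if x i = x j then 0 else 1 := by
  simp only [Delta, psiPP, hp]
  congr 1
  apply propext
  constructor
  · rintro ⟨c, hc, hsub⟩
    obtain ⟨a, -, rfl⟩ := Finset.mem_image.1 (Finset.mem_erase.1 hc).2
    have hi : x i = a := by simpa using hsub (Finset.mem_insert_self i {j})
    have hj : x j = a := by
      simpa using hsub (Finset.mem_insert_of_mem (Finset.mem_singleton_self j))
    exact hi.trans hj.symm
  · intro h
    refine ⟨Finset.univ.filter fun k => x k = x j, Finset.mem_erase.2 ⟨?_, ?_⟩,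
      by simp [Finset.insert_subset_iff, h]⟩
    · exact Finset.nonempty_iff_ne_empty.1 ⟨j, by simp⟩
    · exact Finset.mem_image_of_mem _ (Finset.mem_univ _)

theorem WLin_etaP_apply (lam : Fin m → Fin n → A) (p : OO m) :
    WLin m (Fintype.card A) (etaP (Fintype.card A) lam) p
      = ∑ k, Delta (psiPP fun i => lam i k) p := by
  rw [← Finset.sum_fiberwise' Finset.univ (fun k => psiPP fun i => lam i k) (Delta · p)]
  refine Finset.sum_congr rfl fun α _ => ?_
  simp only [etaP, eta, psiPP, Subtype.ext_iff, Finset.sum_const, nsmul_eq_mul]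

theorem WLin_etaP_pair (lam : Fin m → Fin n → A) {p : OO m} {i j : Fin m}
    (hp : p.1 = {i, j}) :
    WLin m (Fintype.card A) (etaP (Fintype.card A) lam) p = hammingDist (lam i) (lam j) := by
  simp only [WLin_etaP_apply, Delta_psiPP_pair _ hp, hammingDist, Finset.card_filter,
    Nat.cast_sum]
  refine Finset.sum_congr rfl fun k _ => ?_
  split_ifs <;> simp_all

theorem WLin_etaP_eq_iff (lam lam' : Fin m → Fin n → A) :
    WLin m (Fintype.card A) (etaP (Fintype.card A) lam)
        = WLin m (Fintype.card A) (etaP (Fintype.card A) lam') ↔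
      ∀ i j, hammingDist (lam i) (lam j) = hammingDist (lam' i) (lam' j) := by
  constructor
  · intro h i j
    obtain rfl | hij := eq_or_ne i j
    · simp
    · have := congrFun h ⟨{i, j}, Finset.card_pair hij⟩
      rwa [WLin_etaP_pair lam rfl, WLin_etaP_pair lam' rfl, Nat.cast_inj] at this
  · intro h
    funext p
    obtain ⟨i, j, -, hp⟩ := Finset.card_eq_two.1 p.2
    rw [WLin_etaP_pair lam hp, WLin_etaP_pair lam' hp, h]

theorem PsiF_comp_perm_inv (x : Fin m → A) (g : Equiv.Perm (Fin m)) :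
    PsiF (x ∘ ⇑g⁻¹) = permPart g (PsiF x) := by
  have hfiber (a : A) : (Finset.univ.filter fun i => x i = a).image ⇑g
      = Finset.univ.filter fun i => x (g⁻¹ i) = a := by
    ext i
    simp [← Equiv.eq_symm_apply]
  simp only [PsiF, permPart, Finset.image_erase (Finset.image_injective g.injective),
    Finset.image_empty, Finset.image_image, Function.comp_def, hfiber]

theorem permF_etaP (g : Equiv.Perm (Fin m)) (lam : Fin m → Fin n → A) :
    permF g (etaP (Fintype.card A) lam) = etaP (Fintype.card A) fun i => lam (g⁻¹ i) := by
  funext α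
  simp only [permF, permPP, etaP, eta]
  congr 2
  refine Finset.filter_congr fun k _ => ?_
  rw [← permPart_eq_iff_eq_permPart_inv, ← PsiF_comp_perm_inv]
  rfl

end Coordinates

theorem iso_eq_stabW_general {A : Type*} [Fintype A] [DecidableEq A] {m n : ℕ}
    (lam : Fin m → Fin n → A) :
    IsoSet lam = StabWSet m (Fintype.card A) (etaP (Fintype.card A) lam) := by
  ext g
  rw [StabWSet, Set.mem_ofPred_eq, permF_etaP, WLin_etaP_eq_iff, IsoSet, Set.mem_ofPred_eq]
  constructor
  · intro h i j
    simpa using (h (g⁻¹ i) (g⁻¹ j)).symm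
  · intro h i j
    simpa using (h (g i) (g j)).symm

/-- `Iso(C) = Stab_W(η_λ)`. -/
theorem iso_eq_stabW {A : Type*} [Fintype A] [DecidableEq A]
    (hq : 2 ≤ Fintype.card A) {m n : ℕ} (hm : 3 ≤ m) (hn : 0 < n)
    (lam : Fin m → Fin n → A) (hlam : Function.Injective lam) :
    IsoSet lam = StabWSet m (Fintype.card A) (etaP (Fintype.card A) lam) :=
  iso_eq_stabW_general lam
end

section
/- Let q ≥ 2 and let m be an integer with m ≥ 5 or m = 3. Then W(ζ_α) = 0 for every α ∈ P∖P_2, and the family {ζ_α : α ∈ P∖P_2} is a basis of Ker W over ℚ. -/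
/-!
Let `π_p = {p, M ∖ p}` for `p ∈ O`. Then `Δ_{π_p}` is the row `B_p`, and `p ↦ π_p` is injective
as soon as `m ≠ 4` (otherwise `π_p = π_{M ∖ p}`). With the incidence matrix `N` of pairs against
points, `N Nᵀ = B + 2I` and `Nᵀ N = (m - 2)I + J`; this is the strong regularity of the
triangular graph with adjacency matrix `B`, and yields `B² = (m - 6)B + (2m - 8)I + 4J` and
`BJ = (2m - 4)J`. Since `2(m-2)(m-4)D = (m - 2)(B - (m - 6)I) - 2J`, this gives `BD = I`.

A function `η` vanishing off `P₂` satisfies `W η = (η ∘ π) B`, so `W` is injective on such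
functions, and `W ξ_x = x D B = x`. Hence `W ζ_α = Δ_α - Δ_α = 0`, and `ζ_α` restricted to
`P ∖ P₂` is the indicator of `α`; these two facts make the `ζ_α` a basis of `Ker W`.
-/

open Finset Matrix

theorem linearIndependent_and_span_eq_ker_of_restrict_eq_single {ι K N : Type*} [Fintype ι]
    [DecidableEq ι] [Ring K] [AddCommGroup N] [Module K N] (W : (ι → K) →ₗ[K] N)
    (S : ι → Prop) (z : ι → ι → K) (hz : ∀ i, S i → ∀ j, S j → z i j = if j = i then 1 else 0)
    (hWz : ∀ i, S i → W (z i) = 0) (hW : ∀ η : ι → K, (∀ j, S j → η j = 0) → W η = 0 → η = 0) :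
    LinearIndependent K (fun i : {i // S i} => z i.1) ∧
      Submodule.span K (Set.range fun i : {i // S i} => z i.1) = LinearMap.ker W := by
  classical
  have hcoord : ∀ (c : {i // S i} → K) (j : {i // S i}), (∑ i, c i • z i.1) j.1 = c j := by
    intro c j
    simp only [Finset.sum_apply, Pi.smul_apply, smul_eq_mul,
      fun i : {i // S i} => hz i.1 i.2 j.1 j.2, ← Subtype.ext_iff, mul_ite, mul_one, mul_zero,
      sum_ite_eq, mem_univ, if_true]
  refine ⟨Fintype.linearIndependent_iff.2 fun c hc j => ?_, le_antisymm ?_ fun η hη => ?_⟩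
  · rw [← hcoord c j, hc, Pi.zero_apply]
  · rw [Submodule.span_le]
    rintro _ ⟨i, rfl⟩
    exact hWz i.1 i.2
  · have h0 : η - ∑ i : {i // S i}, η i.1 • z i.1 = 0 := by
      refine hW _ (fun j hj => ?_) ?_
      · rw [Pi.sub_apply, hcoord (fun i => η i.1) ⟨j, hj⟩, sub_self]
      · rw [map_sub, LinearMap.mem_ker.1 hη, map_sum]
        simp [hWz _ (Subtype.property _)]
    rw [sub_eq_zero.1 h0]
    exact Submodule.sum_mem _ fun i _ => Submodule.smul_mem _ _ (Submodule.subset_span ⟨i, rfl⟩)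

section Pairs

variable {m : ℕ}

lemma card_filter_mem (i : Fin m) : #{p : OO m | i ∈ p.1} = m - 1 := by
  have hbij : #(univ.erase i) = #{p : OO m | i ∈ p.1} := by
    refine card_bij (fun j hj => ⟨{i, j}, card_pair (ne_of_mem_erase hj).symm⟩) (by simp) ?_ ?_
    · intro j hj j' _ h
      rw [Subtype.mk.injEq] at h
      have hj' : j ∈ ({i, j'} : Finset (Fin m)) := h ▸ by simp
      simpa [ne_of_mem_erase hj] using hj'
    · intro p hp
      obtain ⟨j, hj⟩ := card_eq_one.1 (by rw [card_erase_of_mem (mem_filter.1 hp).2, p.2] :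
        #(p.1.erase i) = 1)
      have hjp : j ∈ p.1.erase i := hj ▸ mem_singleton_self j
      refine ⟨j, mem_erase.2 ⟨ne_of_mem_erase hjp, mem_univ j⟩, Subtype.ext ?_⟩
      change insert i {j} = p.1
      rw [← hj, insert_erase (mem_filter.1 hp).2]
  rw [← hbij, card_erase_of_mem (mem_univ i), card_univ, Fintype.card_fin]

lemma card_filter_mem_mem {i j : Fin m} (hij : i ≠ j) :
    #{p : OO m | i ∈ p.1 ∧ j ∈ p.1} = 1 := by
  rw [card_eq_one]
  refine ⟨⟨{i, j}, card_pair hij⟩, ?_⟩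
  ext p
  simp only [mem_filter, mem_univ, true_and, mem_singleton, Subtype.ext_iff]
  constructor
  · rintro ⟨hi, hj⟩
    exact (eq_of_subset_of_card_le (insert_subset hi (singleton_subset_iff.2 hj))
      (by rw [p.2, card_pair hij])).symm
  · rintro h
    simp [h]

lemma card_inter_le_one {p t : OO m} (h : p ≠ t) : #(p.1 ∩ t.1) ≤ 1 := by
  by_contra! h2
  have hle : #(p.1 ∩ t.1) ≤ 2 := (card_le_card inter_subset_left).trans_eq p.2
  exact h <| Subtype.ext <| (eq_of_subset_of_card_le inter_subset_left (by omega)).symm.trans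
    (eq_of_subset_of_card_le inter_subset_right (by omega))

def incidence (m : ℕ) : Matrix (OO m) (Fin m) ℚ := of fun p i => if i ∈ p.1 then 1 else 0

lemma incidence_mul_transpose : incidence m * (incidence m)ᵀ = Bmat m + (2 : ℚ) • 1 := by
  ext p t
  have hcard : (incidence m * (incidence m)ᵀ) p t = #(p.1 ∩ t.1) := by
    simp [mul_apply, incidence, ← ite_and, ← mem_inter, inter_comm]
  rw [hcard, Matrix.add_apply, Bmat, of_apply, Matrix.smul_apply, one_apply]
  by_cases h : p = t
  · subst h
    simp [p.2]
  · have := card_inter_le_one h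
    interval_cases #(p.1 ∩ t.1) <;> simp [h]

lemma transpose_mul_incidence :
    (incidence m)ᵀ * incidence m = ((m : ℚ) - 2) • 1 + vecMulVec 1 1 := by
  ext i j
  have hcard : ((incidence m)ᵀ * incidence m) i j = #{p : OO m | i ∈ p.1 ∧ j ∈ p.1} := by
    simp [mul_apply, incidence, ← ite_and, and_comm]
  rw [hcard]
  by_cases h : i = j
  · subst h
    have : 1 ≤ m := i.pos
    simp [card_filter_mem, this]
    ring
  · simp [card_filter_mem_mem h, h]

lemma incidence_mulVec_one : incidence m *ᵥ 1 = (2 : ℚ) • 1 := by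
  ext p
  simp [mulVec, dotProduct, incidence, p.2]

lemma transpose_incidence_mulVec_one : (incidence m)ᵀ *ᵥ 1 = ((m : ℚ) - 1) • 1 := by
  ext i
  have : 1 ≤ m := i.pos
  simp [mulVec, dotProduct, incidence, card_filter_mem, this]

lemma Bmat_eq : Bmat m = incidence m * (incidence m)ᵀ - (2 : ℚ) • 1 := by
  rw [incidence_mul_transpose, add_sub_cancel_right]

lemma Bmat_mul_Bmat : Bmat m * Bmat m =
    ((m : ℚ) - 6) • Bmat m + (2 * (m : ℚ) - 8) • 1 + (4 : ℚ) • vecMulVec 1 1 := by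
  have hNN : incidence m * (incidence m)ᵀ * (incidence m * (incidence m)ᵀ) =
      ((m : ℚ) - 2) • (incidence m * (incidence m)ᵀ) + (4 : ℚ) • vecMulVec 1 1 := by
    rw [Matrix.mul_assoc, ← Matrix.mul_assoc (incidence m)ᵀ, transpose_mul_incidence]
    simp only [Matrix.add_mul, Matrix.mul_add, Matrix.smul_mul, Matrix.mul_smul, Matrix.one_mul,
      mul_vecMulVec, vecMulVec_mul, ← mulVec_transpose, transpose_transpose,
      incidence_mulVec_one]
    ext p t
    simp [vecMulVec]
    norm_num
  rw [Bmat_eq]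
  simp only [Matrix.sub_mul, Matrix.mul_sub, Matrix.smul_mul, Matrix.mul_smul, Matrix.one_mul,
    Matrix.mul_one, hNN]
  module

lemma Bmat_mul_vecMulVec_one :
    Bmat m * vecMulVec 1 1 = (2 * (m : ℚ) - 4) • vecMulVec 1 1 := by
  rw [mul_vecMulVec, Bmat_eq, sub_mulVec, ← mulVec_mulVec, transpose_incidence_mulVec_one,
    mulVec_smul, incidence_mulVec_one, smul_mulVec, one_mulVec]
  ext p t
  simp [vecMulVec]
  ring

lemma Dmat_eq : Dmat m = (2 * ((m : ℚ) - 2) * ((m : ℚ) - 4))⁻¹ •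
    (((m : ℚ) - 2) • (Bmat m - ((m : ℚ) - 6) • 1) - (2 : ℚ) • vecMulVec 1 1) := by
  ext p t
  simp only [Dmat, Bmat, of_apply, Matrix.smul_apply, Matrix.sub_apply, one_apply,
    vecMulVec_apply, Pi.one_apply, smul_eq_mul, mul_one, div_eq_inv_mul]
  by_cases h : p = t
  · subst h
    simp only [if_true, inter_self, p.2, OfNat.ofNat_ne_one, if_false]
    ring
  · simp only [if_neg h]
    split_ifs <;> ring

lemma Bmat_mul_Dmat (hm2 : m ≠ 2) (hm4 : m ≠ 4) : Bmat m * Dmat m = 1 := by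
  set den : ℚ := 2 * ((m : ℚ) - 2) * ((m : ℚ) - 4)
  have hden : den ≠ 0 := by
    have h2 : (m : ℚ) - 2 ≠ 0 := sub_ne_zero.2 (by exact_mod_cast hm2)
    have h4 : (m : ℚ) - 4 ≠ 0 := sub_ne_zero.2 (by exact_mod_cast hm4)
    positivity
  calc Bmat m * Dmat m = den⁻¹ • (den • 1) := by
        rw [Dmat_eq]
        simp only [Matrix.mul_smul, Matrix.mul_sub, Matrix.mul_one, Bmat_mul_Bmat,
          Bmat_mul_vecMulVec_one]
        module
    _ = 1 := by rw [smul_smul, inv_mul_cancel₀ hden, one_smul]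

lemma Dmat_mul_Bmat (hm2 : m ≠ 2) (hm4 : m ≠ 4) : Dmat m * Bmat m = 1 :=
  mul_eq_one_comm.1 (Bmat_mul_Dmat hm2 hm4)

end Pairs

section PairPartitions

variable {m q : ℕ}

lemma pair_compl_mem_Pset (hm : 3 ≤ m) (hq : 2 ≤ q) (p : OO m) :
    ({p.1, p.1ᶜ} : Ptn m) ∈ Pset m q := by
  have hcompl : #p.1ᶜ = m - 2 := by rw [card_compl, p.2, Fintype.card_fin]
  refine ⟨⟨?_, fun i => ?_⟩, (card_insert_le _ _).trans (by rwa [card_singleton])⟩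
  · simp only [mem_insert, mem_singleton, forall_eq_or_imp, forall_eq, ← card_pos, p.2, hcompl]
    omega
  · by_cases hi : i ∈ p.1 <;> simp [ExistsUnique, hi]

def pairPartition (hm : 3 ≤ m) (hq : 2 ≤ q) (p : OO m) : PP m q :=
  ⟨{p.1, p.1ᶜ}, pair_compl_mem_Pset hm hq p⟩

lemma pairPartition_injective (hm : 3 ≤ m) (hq : 2 ≤ q) (hm4 : m ≠ 4) :
    Function.Injective (pairPartition hm hq) := by
  intro p t h
  have h' : ({p.1, p.1ᶜ} : Ptn m) = {t.1, t.1ᶜ} := congrArg Subtype.val h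
  have hp : p.1 ∈ ({t.1, t.1ᶜ} : Ptn m) := h' ▸ mem_insert_self _ _
  rcases mem_insert.1 hp with hpt | hpt
  · exact Subtype.ext hpt
  · have := congrArg card (mem_singleton.1 hpt)
    rw [p.2, card_compl, t.2, Fintype.card_fin] at this
    omega

lemma mem_P2set_iff (hm : 3 ≤ m) (hq : 2 ≤ q) (α : PP m q) :
    α.1 ∈ P2set m ↔ α ∈ Set.range (pairPartition hm hq) :=
  ⟨fun ⟨p, hp, h⟩ => ⟨⟨p, hp⟩, Subtype.ext h.symm⟩, fun ⟨p, h⟩ => ⟨p.1, p.2, h ▸ rfl⟩⟩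

lemma Delta_pairPartition (hm : 3 ≤ m) (hq : 2 ≤ q) (p t : OO m) :
    Delta (pairPartition hm hq p) t = Bmat m p t := by
  have h2 : t.1 ⊆ p.1 ↔ #(p.1 ∩ t.1) = 2 := by
    rw [← inter_eq_right]
    exact ⟨fun h => by rw [h, t.2],
      fun h => eq_of_subset_of_card_le inter_subset_right (by rw [h, t.2])⟩
  have h0 : t.1 ⊆ p.1ᶜ ↔ #(p.1 ∩ t.1) = 0 := by
    rw [subset_compl_iff_disjoint_left, card_eq_zero, disjoint_iff_inter_eq_empty]
  have hle : #(p.1 ∩ t.1) ≤ 2 := (card_le_card inter_subset_right).trans_eq t.2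
  simp only [Delta, Bmat, pairPartition, of_apply, mem_insert, mem_singleton, exists_eq_or_imp,
    exists_eq_left, h2, h0]
  split_ifs <;> first | rfl | omega

lemma WLin_eq_vecMul_Bmat (hm : 3 ≤ m) (hq : 2 ≤ q) (hm4 : m ≠ 4) (η : PP m q → ℚ)
    (hη : ∀ α : PP m q, α.1 ∉ P2set m → η α = 0) :
    WLin m q η = (fun p => η (pairPartition hm hq p)) ᵥ* Bmat m := by
  funext t
  refine (Fintype.sum_of_injective _ (pairPartition_injective hm hq hm4) _ _ ?_ ?_).symm
  · intro α hα
    rw [hη α (by rwa [mem_P2set_iff hm hq]), zero_mul]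
  · intro p
    rw [Delta_pairPartition]

lemma eq_zero_of_WLin_eq_zero (hm : 3 ≤ m) (hq : 2 ≤ q) (hm4 : m ≠ 4) {η : PP m q → ℚ}
    (hη : ∀ α : PP m q, α.1 ∉ P2set m → η α = 0) (hW : WLin m q η = 0) : η = 0 := by
  set y : OO m → ℚ := fun p => η (pairPartition hm hq p)
  have hyB : y ᵥ* Bmat m = 0 := (WLin_eq_vecMul_Bmat hm hq hm4 η hη).symm.trans hW
  have hy : y = 0 := by
    rw [← vecMul_one y, ← Bmat_mul_Dmat (by omega) hm4, ← vecMul_vecMul, hyB, zero_vecMul]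
  funext α
  by_cases hα : α.1 ∈ P2set m
  · obtain ⟨p, rfl⟩ := (mem_P2set_iff hm hq α).1 hα
    exact congrFun hy p
  · exact hη α hα

lemma xi_apply_of_notMem_P2set (x : OO m → ℚ) {α : PP m q} (hα : α.1 ∉ P2set m) :
    xi m q x α = 0 :=
  sum_eq_zero fun r _ => by
    rw [sum_eq_zero fun p _ => by rw [if_neg fun h => hα ⟨p.1, p.2, h⟩, mul_zero], mul_zero]

lemma xi_pairPartition (hm : 3 ≤ m) (hq : 2 ≤ q) (hm4 : m ≠ 4) (x : OO m → ℚ) (s : OO m) :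
    xi m q x (pairPartition hm hq s) = (x ᵥ* Dmat m) s := by
  have hpair : ∀ p : OO m, (pairPartition hm hq s).1 = {p.1, p.1ᶜ} ↔ s = p := fun p =>
    Subtype.ext_iff.symm.trans (pairPartition_injective hm hq hm4).eq_iff
  simp only [xi, hpair, mul_ite, mul_one, mul_zero, sum_ite_eq, mem_univ, if_true]
  rfl

lemma WLin_xi (hm : 3 ≤ m) (hq : 2 ≤ q) (hm4 : m ≠ 4) (x : OO m → ℚ) :
    WLin m q (xi m q x) = x := by
  rw [WLin_eq_vecMul_Bmat hm hq hm4 _ fun α hα => xi_apply_of_notMem_P2set x hα]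
  simp only [xi_pairPartition hm hq hm4]
  rw [vecMul_vecMul, Dmat_mul_Bmat (by omega) hm4, vecMul_one]

lemma zeta_apply_of_notMem_P2set (α : PP m q) {β : PP m q} (hβ : β.1 ∉ P2set m) :
    zeta m q α β = if β = α then 1 else 0 := by
  rw [zeta, Pi.sub_apply, xi_apply_of_notMem_P2set _ hβ, sub_zero]

lemma WLin_zeta (hm : 3 ≤ m) (hq : 2 ≤ q) (hm4 : m ≠ 4) (α : PP m q) :
    WLin m q (zeta m q α) = 0 := by
  have hid : WLin m q (fun β => if β = α then 1 else 0) = fun p => Delta α p := by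
    funext p
    simp [WLin]
  rw [zeta, map_sub, hid, WLin_xi hm hq hm4, sub_self]

end PairPartitions

/-- for `q ≥ 2` and `m ≥ 5` or `m = 3`, `W(ζ_α) = 0` for all `α ∈ P ∖ P₂`,
and the family `{ζ_α : α ∈ P ∖ P₂}` is a basis of `Ker W`. -/
theorem zeta_basis_kerW (m q : ℕ) (hq : 2 ≤ q) (hm : 5 ≤ m ∨ m = 3) :
    (∀ α : PP m q, (α : Ptn m) ∉ P2set m → WLin m q (zeta m q α) = 0) ∧
    LinearIndependent ℚ
      (fun α : {α : PP m q // (α : Ptn m) ∉ P2set m} => zeta m q α.1) ∧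
    Submodule.span ℚ
        (Set.range fun α : {α : PP m q // (α : Ptn m) ∉ P2set m} => zeta m q α.1) =
      LinearMap.ker (WLin m q) := by
  have hm3 : 3 ≤ m := by omega
  have hm4 : m ≠ 4 := by omega
  exact ⟨fun α _ => WLin_zeta hm3 hq hm4 α,
    linearIndependent_and_span_eq_ker_of_restrict_eq_single (WLin m q) _ (zeta m q)
      (fun α _ _ hβ => zeta_apply_of_notMem_P2set α hβ) (fun α _ => WLin_zeta hm3 hq hm4 α)
      fun _ hη hW => eq_zero_of_WLin_eq_zero hm3 hq hm4 hη hW⟩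
end
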